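/- arXiv:1302.2023 — 4 statements merged into one kernel-verified Lean document; each statement's English description precedes it below -/
import Mathlib

section
/- For a condensable consonant plausibility function, pl(K) = sup_{u ∈ K} f_S(u) for all K ⊆ 𝕌, where f_S(u) = P_S(S ∋ u) is the contour function; i.e., the plausibility function is determined by its values on singletons. -/
open MeasureTheory Set ENNReal

/-! On a finite set `F`, nestedness makes the events `{ω | u ∈ S ω}`, `u ∈ F`, a finite chain,
so the event that `S` hits `F` is the largest of them and `pl F = max_{u ∈ F} pl {u}`.
Condensability, applied to the upward net of finite subsets of `K`, passes this to arbitrary `K`. -/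

section Condensable

variable {U β : Type*} [CompleteLattice β]

def IsCondensable (pl : Set U → β) : Prop :=
  ∀ 𝒦 : Set (Set U), (∀ K₁ ∈ 𝒦, ∀ K₂ ∈ 𝒦, ∃ K₃ ∈ 𝒦, K₁ ∪ K₂ ⊆ K₃) →
    pl (⋃₀ 𝒦) = ⨆ K ∈ 𝒦, pl K

theorem sUnion_finite_subsets (K : Set U) : ⋃₀ {F | F ⊆ K ∧ F.Finite} = K :=
  subset_antisymm (sUnion_subset fun _ hF => hF.1) fun u hu =>
    ⟨{u}, ⟨singleton_subset_iff.mpr hu, finite_singleton u⟩, rfl⟩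

theorem IsCondensable.eq_iSup_finite_subsets {pl : Set U → β} (hpl : IsCondensable pl)
    (K : Set U) : pl K = ⨆ F ∈ {F | F ⊆ K ∧ F.Finite}, pl F := by
  conv_lhs => rw [← sUnion_finite_subsets K]
  refine hpl _ ?_
  rintro K₁ ⟨h₁K, h₁⟩ K₂ ⟨h₂K, h₂⟩
  exact ⟨K₁ ∪ K₂, ⟨union_subset h₁K h₂K, h₁.union h₂⟩, subset_rfl⟩

theorem IsCondensable.eq_iSup_singleton {pl : Set U → β} (hpl : IsCondensable pl)
    (hfin : ∀ F : Set U, F.Finite → pl F = ⨆ u ∈ F, pl {u}) (K : Set U) :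
    pl K = ⨆ u ∈ K, pl {u} := by
  rw [hpl.eq_iSup_finite_subsets K]
  apply le_antisymm
  · refine iSup₂_le fun F hF => ?_
    rw [hfin F hF.2]
    exact biSup_mono hF.1
  · refine iSup₂_le fun u hu => ?_
    exact le_iSup₂_of_le (f := fun F (_ : F ∈ {F | F ⊆ K ∧ F.Finite}) => pl F) {u}
      ⟨singleton_subset_iff.mpr hu, finite_singleton u⟩ le_rfl

end Condensable

section Chain

variable {ι α : Type*}

theorem exists_biUnion_eq_of_chain {A : ι → Set α} (hA : ∀ i j, A i ⊆ A j ∨ A j ⊆ A i)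
    {F : Set ι} (hF : F.Finite) (hne : F.Nonempty) : ∃ i ∈ F, ⋃ j ∈ F, A j = A i := by
  obtain ⟨i, hi, hmax⟩ := hF.exists_maximalFor A F hne
  refine ⟨i, hi, subset_antisymm (iUnion₂_subset fun j hj => ?_) (subset_biUnion_of_mem hi)⟩
  exact (hA j i).elim id fun hij => hmax hj hij

theorem measure_biUnion_finite_of_chain [MeasurableSpace α] (μ : Measure α) {A : ι → Set α}
    (hA : ∀ i j, A i ⊆ A j ∨ A j ⊆ A i) {F : Set ι} (hF : F.Finite) :
    μ (⋃ i ∈ F, A i) = ⨆ i ∈ F, μ (A i) := by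
  rcases F.eq_empty_or_nonempty with rfl | hne
  · simp
  obtain ⟨i, hi, hunion⟩ := exists_biUnion_eq_of_chain hA hF hne
  refine le_antisymm ?_ (iSup₂_le fun j hj => measure_mono (subset_biUnion_of_mem hj))
  rw [hunion]
  exact le_iSup₂ (f := fun j (_ : j ∈ F) => μ (A j)) i hi

end Chain

section Nested

variable {Ω U : Type*}

theorem setOf_mem_chain_of_nested {S : Ω → Set U} (hnested : ∀ ω ω', S ω ⊆ S ω' ∨ S ω' ⊆ S ω)
    (u v : U) : {ω | u ∈ S ω} ⊆ {ω | v ∈ S ω} ∨ {ω | v ∈ S ω} ⊆ {ω | u ∈ S ω} := by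
  by_contra! h
  obtain ⟨ω, hωu, hωv⟩ := not_subset.mp h.1
  obtain ⟨ω', hω'v, hω'u⟩ := not_subset.mp h.2
  rcases hnested ω ω' with hs | hs
  · exact hω'u (hs hωu)
  · exact hωv (hs hω'v)

theorem setOf_inter_nonempty_eq_biUnion (S : Ω → Set U) (K : Set U) :
    {ω | (S ω ∩ K).Nonempty} = ⋃ u ∈ K, {ω | u ∈ S ω} := by
  ext ω
  simp only [mem_ofPred_eq, mem_iUnion, exists_prop, Set.Nonempty, mem_inter_iff]
  exact exists_congr fun u => and_comm

end Nested

/-- A condensable consonant plausibility function is determined by its contour function: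
`pl(K) = sup_{u ∈ K} pl({u})` for all `K`. -/
theorem stmt8 {Ω U : Type*} [MeasurableSpace Ω]
    (P : Measure Ω) (S : Ω → Set U)
    (hnested : ∀ ω ω', S ω ⊆ S ω' ∨ S ω' ⊆ S ω)
    (pl : Set U → ℝ≥0∞)
    (hpl : ∀ K : Set U, pl K = P {ω | (S ω ∩ K).Nonempty})
    (hcond : ∀ 𝒦 : Set (Set U),
      (∀ K₁ ∈ 𝒦, ∀ K₂ ∈ 𝒦, ∃ K₃ ∈ 𝒦, K₁ ∪ K₂ ⊆ K₃) →
      pl (⋃₀ 𝒦) = ⨆ K ∈ 𝒦, pl K)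
    (K : Set U) :
    pl K = ⨆ u ∈ K, pl {u} := by
  have hsingleton : ∀ u, pl {u} = P {ω | u ∈ S ω} := fun u => by
    rw [hpl, setOf_inter_nonempty_eq_biUnion, biUnion_singleton]
  refine IsCondensable.eq_iSup_singleton hcond (fun F hF => ?_) K
  simp only [hpl F, hsingleton, setOf_inter_nonempty_eq_biUnion]
  exact measure_biUnion_finite_of_chain P (setOf_mem_chain_of_nested hnested) hF
end

section
/- Suppose T = a(U, θ) with U ~ P_U, and let Θ_t(u) = {θ : t = a(u, θ)} be nonempty for all (t, u). Let S be a predictive random set and Θ_t(S) = ∪_{u ∈ S} Θ_t(u). Then for the true θ and T = a(U_T, θ): Θ_T(S) ∋ θ if and only if S ∋ U_T; consequently pl_T(θ) := P_S(Θ_T(S) ∋ θ) = f_S(U_T). -/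
open MeasureTheory Set

/-- With association `T = a(U,θ)`, `Θ_t(u) = {θ' : t = a(u,θ')}` nonempty for all `(t,u)`,
and `T = a(U_T, θ)` for the true `θ`: `Θ_T(S) ∋ θ` iff `S ∋ U_T`; consequently
`pl_T(θ) = P_S(Θ_T(S) ∋ θ) = P_S(S ∋ U_T) = f_S(U_T)`. -/
theorem stmt9 {Ω U Θ T : Type*} [MeasurableSpace Ω]
    (P : Measure Ω) (S : Ω → Set U)
    (a : U → Θ → T) (θ : Θ) (U_T : U)
    (hinj : ∀ u u' : U, a u θ = a u' θ → u = u')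
    (hne : ∀ (t : T) (u : U), ∃ θ' : Θ, t = a u θ') :
    (∀ ω, (θ ∈ ⋃ u ∈ S ω, {θ' : Θ | a U_T θ = a u θ'}) ↔ U_T ∈ S ω) ∧
    P {ω | θ ∈ ⋃ u ∈ S ω, {θ' : Θ | a U_T θ = a u θ'}} = P {ω | U_T ∈ S ω} := by
  have key : ∀ ω, (θ ∈ ⋃ u ∈ S ω, {θ' : Θ | a U_T θ = a u θ'}) ↔ U_T ∈ S ω := by
    intro ω
    simp only [mem_iUnion, mem_setOf_eq]
    constructor
    · rintro ⟨u, hu, h⟩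
      exact (hinj U_T u h) ▸ hu
    · intro h
      exact ⟨U_T, h, rfl⟩
  refine ⟨key, ?_⟩
  congr 1
  ext ω
  exact key ω
end

section
/- Fix θ ∈ Θ. If the predictive random set S is valid (f_S(U) stochastically no smaller than Unif(0,1) for U ~ P_U) and Θ_t(u) ≠ ∅ for all (t, u), then pl_T(θ) is stochastically no smaller than Unif(0,1) when T ~ P_{T|θ}; i.e., P_{T|θ}(pl_T(θ) ≤ α) ≤ α for all α ∈ (0,1). -/
open MeasureTheory Set ENNReal

/-- If the predictive random set `S` is valid and `Θ_t(u)` is nonempty for all `(t,u)`,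
then `pl_T(θ)` is stochastically no smaller than `Unif(0,1)` under `T ~ P_{T|θ}`,
i.e. `P_{T|θ}(pl_T(θ) ≤ α) ≤ α` for all `α ∈ (0,1)`.  Here the sampling of `T = a(U,θ)` is
represented by `U ~ P_U`, so the coverage probability is computed under `μ = P_U`. -/
theorem stmt10 {Ω U Θ T : Type*} [MeasurableSpace Ω] [MeasurableSpace U]
    (PS : Measure Ω) (μ : Measure U) (S : Ω → Set U)
    (a : U → Θ → T) (θ : Θ)
    (hne : ∀ (t : T) (u : U), ∃ θ' : Θ, t = a u θ')
    (f : U → ℝ≥0∞) (hfdef : ∀ u, f u = PS {ω | u ∈ S ω})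
    (hvalid : ∀ α ∈ Ioo (0:ℝ) 1, μ {u | f u ≤ ENNReal.ofReal α} ≤ ENNReal.ofReal α)
    (pl : U → ℝ≥0∞)
    (hpl : ∀ u, pl u = PS {ω | θ ∈ ⋃ v ∈ S ω, {θ' : Θ | a u θ = a v θ'}}) :
    ∀ α ∈ Ioo (0:ℝ) 1, μ {u | pl u ≤ ENNReal.ofReal α} ≤ ENNReal.ofReal α := by
  intro α hα
  have hle : ∀ u, f u ≤ pl u := by
    intro u
    rw [hfdef, hpl]
    apply measure_mono
    intro ω hω
    exact mem_iUnion₂.2 ⟨u, hω, rfl⟩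
  have hsub : {u | pl u ≤ ENNReal.ofReal α} ⊆ {u | f u ≤ ENNReal.ofReal α} :=
    fun u hu => le_trans (hle u) hu
  exact le_trans (measure_mono hsub) (hvalid α hα)
end

section
/- Under validity of S and nonemptiness of Θ_t(u), the plausibility region 𝒫_α(T) = {θ : pl_T(θ) > α} satisfies P_{T|θ}(𝒫_α(T) ∋ θ) ≥ 1 - α for all θ ∈ Θ and all α ∈ (0,1); i.e., it is a 100(1-α)% confidence region. -/
open MeasureTheory Set ENNReal

/-- Under validity of `S` and nonemptiness of `Θ_t(u)`, the plausibility region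
`𝒫_α(T) = {θ : pl_T(θ) > α}` has coverage probability at least `1 - α`:
`P_{T|θ}(𝒫_α(T) ∋ θ) ≥ 1 - α` for every `θ` and every `α ∈ (0,1)`. -/
theorem stmt11 {Ω U Θ T : Type*} [MeasurableSpace Ω] [MeasurableSpace U]
    (PS : Measure Ω) (μ : Measure U) [IsProbabilityMeasure μ] (S : Ω → Set U)
    (a : U → Θ → T)
    (hne : ∀ (t : T) (u : U), ∃ θ' : Θ, t = a u θ')
    (f : U → ℝ≥0∞) (hfdef : ∀ u, f u = PS {ω | u ∈ S ω})
    (hvalid : ∀ α ∈ Ioo (0:ℝ) 1, μ {u | f u ≤ ENNReal.ofReal α} ≤ ENNReal.ofReal α) :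
    ∀ (θ : Θ) (pl : U → ℝ≥0∞),
      (∀ u, pl u = PS {ω | θ ∈ ⋃ v ∈ S ω, {θ' : Θ | a u θ = a v θ'}}) →
      ∀ α ∈ Ioo (0:ℝ) 1,
        ENNReal.ofReal (1 - α) ≤ μ {u | ENNReal.ofReal α < pl u} := by
  intro θ pl hpl α hα
  -- f u ≤ pl u pointwise
  have hfp : ∀ u, f u ≤ pl u := by
    intro u
    rw [hfdef, hpl]
    apply measure_mono
    intro ω hω
    simp only [mem_setOf_eq, mem_iUnion]
    exact ⟨u, hω, rfl⟩
  -- {pl ≤ α} ⊆ {f ≤ α}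
  have hsub : {u | pl u ≤ ENNReal.ofReal α} ⊆ {u | f u ≤ ENNReal.ofReal α} :=
    fun u hu => le_trans (hfp u) hu
  have h1 : μ {u | pl u ≤ ENNReal.ofReal α} ≤ ENNReal.ofReal α :=
    le_trans (measure_mono hsub) (hvalid α hα)
  -- subadditivity: 1 ≤ μ A + μ Aᶜ
  have hcover : (1 : ℝ≥0∞) ≤ μ {u | ENNReal.ofReal α < pl u} + μ {u | pl u ≤ ENNReal.ofReal α} := by
    have : (univ : Set U) ⊆ {u | ENNReal.ofReal α < pl u} ∪ {u | pl u ≤ ENNReal.ofReal α} := by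
      intro u _
      rcases lt_or_ge (ENNReal.ofReal α) (pl u) with h | h
      · exact Or.inl h
      · exact Or.inr h
    calc (1 : ℝ≥0∞) = μ univ := (measure_univ).symm
    _ ≤ μ ({u | ENNReal.ofReal α < pl u} ∪ {u | pl u ≤ ENNReal.ofReal α}) := measure_mono this
    _ ≤ _ := measure_union_le _ _
  have hα' : ENNReal.ofReal (1 - α) = 1 - ENNReal.ofReal α := by
    rw [ENNReal.ofReal_sub _ hα.1.le, ENNReal.ofReal_one]
  rw [hα']
  rw [tsub_le_iff_right]
  calc (1 : ℝ≥0∞) ≤ μ {u | ENNReal.ofReal α < pl u} + μ {u | pl u ≤ ENNReal.ofReal α} := hcover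
  _ ≤ μ {u | ENNReal.ofReal α < pl u} + ENNReal.ofReal α := by gcongr
end
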